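/- arXiv:1512.03500 — 3 statements merged into one kernel-verified Lean document; each statement's English description precedes it below -/
import Mathlib

section
/- Let N₁,…,N_b be p×p real positive definite matrices and let G be the bp×bp block matrix whose (i,j) block (each block p×p) equals Σ_{k=max(i,j)}^{b} N_k. Then G is invertible and G^{-1} is the block tridiagonal matrix with diagonal blocks (G^{-1})_{1,1} = N₁^{-1} and (G^{-1})_{i,i} = N_{i−1}^{-1} + N_i^{-1} for i = 2,…,b, off-diagonal blocks (G^{-1})_{i,i+1} = (G^{-1})_{i+1,i} = −N_i^{-1} for i = 1,…,b−1, and all other blocks zero. -/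
/-!
Let `U` be the block upper-triangular matrix all of whose blocks on and above the diagonal are
identities. Then `G = U * diagonal N * Uᵀ`, because both sides have `(i, j)` block
`∑_{k ≥ max i j} N k`. The inverse of `U` is the bidiagonal difference matrix `1 - S`, where `S` is
the superdiagonal shift, so `G⁻¹ = (1 - S)ᵀ * diagonal N⁻¹ * (1 - S)`, and expanding this product
gives the tridiagonal matrix. All of this happens in `b × b` matrices over the noncommutative ring
of `p × p` matrices.
-/

open Matrix Finset

variable {R : Type*}

section
variable (R)

def suffixSumMatrix [Zero R] [One R] (n : ℕ) : Matrix (Fin n) (Fin n) R :=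
  of fun i j => if i ≤ j then 1 else 0

def shiftMatrix [Zero R] [One R] (n : ℕ) : Matrix (Fin n) (Fin n) R :=
  of fun i j => if (i : ℕ) + 1 = j then 1 else 0

end

def cumulativeGram [AddCommMonoid R] {n : ℕ} (N : Fin n → R) : Matrix (Fin n) (Fin n) R :=
  of fun i j => ∑ k ∈ univ.filter (fun k => max i j ≤ k), N k

/-- The Laplacian of the path `0 — 1 — ⋯ — n` with weight `M k` on the edge `{k, k + 1}`, with the
row and column of the vertex `n` removed. -/
def groundedPathLaplacian [Neg R] [Add R] [Zero R] {n : ℕ} (M : Fin n → R) :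
    Matrix (Fin n) (Fin n) R :=
  of fun i j =>
    if i = j then (if h : (i : ℕ) = 0 then M i else M ⟨i - 1, by omega⟩ + M i)
    else if (j : ℕ) = i + 1 then -M i
    else if (i : ℕ) = j + 1 then -M j
    else 0

theorem Fin.sum_ite_val_add_one_eq {M : Type*} [AddCommMonoid M] {n : ℕ} (j : Fin n)
    (f : Fin n → M) :
    ∑ k : Fin n, (if (k : ℕ) + 1 = j then f k else 0) =
      if h : (j : ℕ) = 0 then 0 else f ⟨j - 1, by omega⟩ := by
  split_ifs with hj
  · exact Finset.sum_eq_zero fun k _ => if_neg (by omega)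
  · rw [Finset.sum_eq_single ⟨j - 1, by omega⟩]
    · exact if_pos (by simp; omega)
    · intro k _ hk
      exact if_neg fun h => hk (Fin.ext (by simp; omega))
    · simp

theorem suffixSumMatrix_map {S : Type*} [NonAssocSemiring R] [NonAssocSemiring S] (f : R →+* S)
    (n : ℕ) : (suffixSumMatrix R n).map f = suffixSumMatrix S n := by
  ext i j
  simp [suffixSumMatrix, apply_ite f]

theorem shiftMatrix_map {S : Type*} [NonAssocSemiring R] [NonAssocSemiring S] (f : R →+* S)
    (n : ℕ) : (shiftMatrix R n).map f = shiftMatrix S n := by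
  ext i j
  simp [shiftMatrix, apply_ite f]

theorem suffixSumMatrix_mul_one_sub_shiftMatrix [Ring R] (n : ℕ) :
    suffixSumMatrix R n * (1 - shiftMatrix R n) = 1 := by
  rw [mul_sub, mul_one]
  ext i j
  simp only [Matrix.sub_apply, mul_apply, suffixSumMatrix, shiftMatrix, of_apply, mul_ite, mul_one,
    mul_zero]
  rw [Fin.sum_ite_val_add_one_eq, one_apply]
  split_ifs <;> simp only [Fin.ext_iff, Fin.le_def] at * <;> first | omega | simp

/-- Over a noncommutative ring transposition does not reverse products, so this is transported
from `ℤ`, where a one-sided inverse is two-sided. -/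
theorem transpose_suffixSumMatrix_mul_transpose_one_sub_shiftMatrix [Ring R] (n : ℕ) :
    (suffixSumMatrix R n)ᵀ * (1 - shiftMatrix R n)ᵀ = 1 := by
  have h : (1 - shiftMatrix ℤ n) * suffixSumMatrix ℤ n = 1 :=
    mul_eq_one_comm.mp (suffixSumMatrix_mul_one_sub_shiftMatrix n)
  calc (suffixSumMatrix R n)ᵀ * (1 - shiftMatrix R n)ᵀ
      = (((1 - shiftMatrix ℤ n) * suffixSumMatrix ℤ n)ᵀ).map (Int.castRingHom R) := by
        rw [transpose_mul, Matrix.map_mul, transpose_map, transpose_map,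
          Matrix.map_sub _ (map_sub _), Matrix.map_one _ (map_zero _) (map_one _),
          suffixSumMatrix_map, shiftMatrix_map]
    _ = 1 := by rw [h, transpose_one, Matrix.map_one _ (map_zero _) (map_one _)]

theorem cumulativeGram_eq [Semiring R] {n : ℕ} (N : Fin n → R) :
    cumulativeGram N = suffixSumMatrix R n * diagonal N * (suffixSumMatrix R n)ᵀ := by
  ext i j
  rw [mul_apply, cumulativeGram, of_apply, Finset.sum_filter]
  refine Finset.sum_congr rfl fun k _ => ?_
  simp only [mul_diagonal, transpose_apply, suffixSumMatrix, of_apply, max_le_iff]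
  split_ifs <;> simp_all

theorem groundedPathLaplacian_eq [Ring R] {n : ℕ} (M : Fin n → R) :
    groundedPathLaplacian M = (1 - shiftMatrix R n)ᵀ * diagonal M * (1 - shiftMatrix R n) := by
  ext i j
  have hSDS : ((shiftMatrix R n)ᵀ * diagonal M * shiftMatrix R n) i j =
      if h : (i : ℕ) = 0 then 0 else if (i : ℕ) = j then M ⟨i - 1, by omega⟩ else 0 := by
    rw [mul_apply]
    simp only [mul_diagonal, transpose_apply, shiftMatrix, of_apply, ite_mul, one_mul, zero_mul]
    rw [Fin.sum_ite_val_add_one_eq]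
    split_ifs <;> simp_all <;> omega
  simp only [transpose_sub, transpose_one, sub_mul, mul_sub, one_mul, mul_one, Matrix.sub_apply]
  rw [hSDS]
  simp only [mul_diagonal, diagonal_mul, transpose_apply, shiftMatrix, of_apply,
    groundedPathLaplacian, diagonal_apply]
  split_ifs <;> simp only [Fin.ext_iff] at * <;> first | omega | simp [add_comm]

theorem cumulativeGram_mul_groundedPathLaplacian [Ring R] {n : ℕ} (N M : Fin n → R)
    (h : ∀ k, N k * M k = 1) : cumulativeGram N * groundedPathLaplacian M = 1 := by
  set U := suffixSumMatrix R n
  set V := 1 - shiftMatrix R n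
  rw [cumulativeGram_eq, groundedPathLaplacian_eq]
  calc U * diagonal N * Uᵀ * (Vᵀ * diagonal M * V)
      = U * diagonal N * (Uᵀ * Vᵀ) * diagonal M * V := by simp only [Matrix.mul_assoc]
    _ = U * V := by
          rw [transpose_suffixSumMatrix_mul_transpose_one_sub_shiftMatrix, Matrix.mul_one,
            Matrix.mul_assoc _ (diagonal N), diagonal_mul_diagonal, funext h, diagonal_one,
            Matrix.mul_one]
    _ = 1 := suffixSumMatrix_mul_one_sub_shiftMatrix n

/-- Let `N₁,…,N_b` be `p×p` positive definite matrices and let `G`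
be the `bp×bp` block matrix whose `(i,j)` block equals `Σ_{k ≥ max(i,j)} N_k`.
Then `G` is invertible and `G⁻¹` is block tridiagonal with diagonal blocks
`N₁⁻¹` and `N_{i−1}⁻¹ + N_i⁻¹` (`i ≥ 2`), off-diagonal blocks `−N_i⁻¹`, and all
other blocks zero. -/
theorem cumulative_block_gram_inverse
    {b p : ℕ} (N : Fin b → Matrix (Fin p) (Fin p) ℝ)
    (hN : ∀ k, (N k).PosDef)
    (G : Matrix (Fin b × Fin p) (Fin b × Fin p) ℝ)
    (hG : ∀ (i j : Fin b) (r c : Fin p),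
      G (i, r) (j, c)
        = (∑ k ∈ Finset.univ.filter (fun k : Fin b => max i j ≤ k), N k) r c)
    (T : Matrix (Fin b × Fin p) (Fin b × Fin p) ℝ)
    (hT : ∀ (i j : Fin b) (r c : Fin p),
      T (i, r) (j, c)
        = if i = j then
            (if h : (i : ℕ) = 0 then (N i)⁻¹ r c
             else ((N ⟨(i : ℕ) - 1, by have := i.isLt; omega⟩)⁻¹ + (N i)⁻¹) r c)
          else if (j : ℕ) = (i : ℕ) + 1 then (-(N i)⁻¹) r c
          else if (i : ℕ) = (j : ℕ) + 1 then (-(N j)⁻¹) r c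
          else 0) :
    IsUnit G.det ∧ G⁻¹ = T := by
  have hG' : G = compRingEquiv _ _ _ (cumulativeGram N) := by
    ext ⟨i, r⟩ ⟨j, c⟩
    exact hG i j r c
  have hT' : T = compRingEquiv _ _ _ (groundedPathLaplacian fun k => (N k)⁻¹) := by
    ext ⟨i, r⟩ ⟨j, c⟩
    rw [hT]
    simp only [compRingEquiv_apply, comp_apply, groundedPathLaplacian, of_apply]
    split_ifs <;> rfl
  have hGT : G * T = 1 := by
    rw [hG', hT', ← map_mul, cumulativeGram_mul_groundedPathLaplacian N _
      fun k => mul_nonsing_inv _ ((isUnit_iff_isUnit_det _).mp (hN k).isUnit), map_one]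
  exact ⟨isUnit_det_of_right_inverse hGT, inv_eq_right_inv hGT⟩
end

section
/- Let X₁,…,X_b be real matrices, X_i of size n_i × p, such that each Gram matrix X_i'X_i is invertible, and let y_i ∈ ℝ^{n_i} for i = 1,…,b. Let 𝒳 be the (Σn_i) × (bp) stacked design whose j-th column block (j = 1,…,b) has rows equal to zero for row blocks 1,…,j−1 and equal to X_k for row blocks k = j,…,b, and let y stack y₁,…,y_b. Then 𝒳'𝒳 is invertible, and the ordinary least squares coefficient θ̂ = (𝒳'𝒳)^{-1}𝒳'y has block components θ̂₁ = (X₁'X₁)^{-1}X₁'y₁ and θ̂_i = (X_i'X_i)^{-1}X_i'y_i − (X_{i−1}'X_{i−1})^{-1}X_{i−1}'y_{i−1} for i = 2,…,b. -/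
open Matrix Kronecker Finset

/-!
The stacked design factors as `𝒳 = 𝒜 (L ⊗ Iₚ)`, where `𝒜 = diag(X₁, …, X_b)` and `L` is the
lower-triangular matrix of ones. Reparametrising by the invertible `L ⊗ Iₚ` turns the least-squares
coefficient of `𝒳` into `(L ⊗ Iₚ)⁻¹` applied to that of `𝒜`, which is the stack of the blockwise
coefficients `β̂ᵢ = (Xᵢ'Xᵢ)⁻¹Xᵢ'yᵢ`. Since `L` takes cumulative sums, `L⁻¹` takes successive
differences `β̂ᵢ - β̂ᵢ₋₁`.
-/

namespace Matrix

variable {α : Type*} [CommRing α]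

section LeastSquares

variable {m k : Type*} [Fintype m]

noncomputable def leastSquares [Fintype k] [DecidableEq k] (A : Matrix m k α) : Matrix k m α :=
  (Aᵀ * A)⁻¹ * Aᵀ

theorem gram_mul [Fintype k] (A : Matrix m k α) (C : Matrix k k α) :
    (A * C)ᵀ * (A * C) = Cᵀ * (Aᵀ * A) * C := by
  simp only [transpose_mul, Matrix.mul_assoc]

theorem isUnit_det_gram_mul [Fintype k] [DecidableEq k] {A : Matrix m k α} {C : Matrix k k α}
    (hA : IsUnit (Aᵀ * A).det) (hC : IsUnit C.det) : IsUnit ((A * C)ᵀ * (A * C)).det := by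
  rw [gram_mul, det_mul, det_mul, det_transpose]
  exact (hC.mul hA).mul hC

theorem leastSquares_mul [Fintype k] [DecidableEq k] (A : Matrix m k α) {C : Matrix k k α}
    (hC : IsUnit C.det) :
    leastSquares (A * C) = C⁻¹ * leastSquares A := by
  have hCT : Cᵀ⁻¹ * Cᵀ = 1 := nonsing_inv_mul _ (by rwa [det_transpose])
  rw [leastSquares, leastSquares, gram_mul, mul_inv_rev, mul_inv_rev, transpose_mul]
  calc C⁻¹ * ((Aᵀ * A)⁻¹ * Cᵀ⁻¹) * (Cᵀ * Aᵀ)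
      = C⁻¹ * ((Aᵀ * A)⁻¹ * (Cᵀ⁻¹ * Cᵀ) * Aᵀ) := by simp only [Matrix.mul_assoc]
    _ = C⁻¹ * ((Aᵀ * A)⁻¹ * Aᵀ) := by rw [hCT, Matrix.mul_one]

theorem gram_submatrix_equiv {k' : Type*} [Fintype k'] (A : Matrix m k α) (e : k' ≃ k) :
    (A.submatrix id e)ᵀ * A.submatrix id e = (Aᵀ * A).submatrix e e := by
  rw [transpose_submatrix]
  exact submatrix_mul_equiv _ _ _ (Equiv.refl m) _

theorem leastSquares_submatrix_equiv [Fintype k] [DecidableEq k] {k' : Type*} [Fintype k']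
    [DecidableEq k']    (A : Matrix m k α) (e : k' ≃ k) :
    leastSquares (A.submatrix id e) = (leastSquares A).submatrix e id := by
  rw [leastSquares, leastSquares, gram_submatrix_equiv, inv_submatrix_equiv, transpose_submatrix,
    submatrix_mul_equiv]

end LeastSquares

section BlockDiagonal

variable {ι : Type*} [Fintype ι] [DecidableEq ι] {m n : ι → Type*}

theorem blockDiagonal'_inv_mul [∀ i, Fintype (n i)] [∀ i, DecidableEq (n i)]
    {M : ∀ i, Matrix (n i) (n i) α} (hM : ∀ i, IsUnit (M i).det) :
    blockDiagonal' (fun i => (M i)⁻¹) * blockDiagonal' M = 1 := by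
  rw [← blockDiagonal'_mul, ← blockDiagonal'_one]
  exact congrArg _ (funext fun i => nonsing_inv_mul _ (hM i))

theorem isUnit_det_blockDiagonal' [∀ i, Fintype (n i)] [∀ i, DecidableEq (n i)]
    {M : ∀ i, Matrix (n i) (n i) α} (hM : ∀ i, IsUnit (M i).det) :
    IsUnit (blockDiagonal' M).det :=
  isUnit_det_of_left_inverse (blockDiagonal'_inv_mul hM)

theorem inv_blockDiagonal' [∀ i, Fintype (n i)] [∀ i, DecidableEq (n i)]
    {M : ∀ i, Matrix (n i) (n i) α} (hM : ∀ i, IsUnit (M i).det) :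
    (blockDiagonal' M)⁻¹ = blockDiagonal' fun i => (M i)⁻¹ :=
  inv_eq_left_inv (blockDiagonal'_inv_mul hM)

theorem gram_blockDiagonal' [∀ i, Fintype (m i)] (X : ∀ i, Matrix (m i) (n i) α) :
    (blockDiagonal' X)ᵀ * blockDiagonal' X = blockDiagonal' fun i => (X i)ᵀ * X i := by
  rw [blockDiagonal'_transpose, blockDiagonal'_mul]

theorem leastSquares_blockDiagonal' [∀ i, Fintype (m i)] [∀ i, Fintype (n i)]
    [∀ i, DecidableEq (n i)] {X : ∀ i, Matrix (m i) (n i) α}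
    (hX : ∀ i, IsUnit ((X i)ᵀ * X i).det) :
    leastSquares (blockDiagonal' X) = blockDiagonal' fun i => leastSquares (X i) := by
  rw [leastSquares, gram_blockDiagonal', inv_blockDiagonal' hX, blockDiagonal'_transpose,
    ← blockDiagonal'_mul]
  rfl

theorem blockDiagonal'_mulVec [∀ i, Fintype (n i)] (M : ∀ i, Matrix (m i) (n i) α)
    (v : (Σ i, n i) → α) (i : ι) (r : m i) :
    (blockDiagonal' M *ᵥ v) ⟨i, r⟩ = (M i *ᵥ fun c => v ⟨i, c⟩) r := by
  simp only [mulVec, dotProduct, ← univ_sigma_univ, sum_sigma]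
  rw [Fintype.sum_eq_single i]
  · simp
  · intro j hj
    simp [blockDiagonal'_apply_ne _ _ _ (Ne.symm hj)]

end BlockDiagonal

def cumulativeSum (ι α : Type*) [LE ι] [DecidableLE ι] [Zero α] [One α] : Matrix ι ι α :=
  of fun i j => if j ≤ i then 1 else 0

section Cumulative

variable {ι : Type*} [Fintype ι]

theorem cumulativeSum_mulVec [LinearOrder ι] [LocallyFiniteOrderBot ι] (v : ι → α) (i : ι) :
    (cumulativeSum ι α *ᵥ v) i = ∑ j ∈ Iic i, v j := by
  simp [cumulativeSum, mulVec, dotProduct, ← sum_filter, filter_ge_eq_Iic]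

theorem det_cumulativeSum [LinearOrder ι] : (cumulativeSum ι α).det = 1 := by
  rw [det_of_isLowerTriangular (cumulativeSum ι α) fun i j hij => if_neg (not_le.2 hij)]
  simp [cumulativeSum]

theorem kronecker_one_mulVec {κ : Type*} [Fintype κ] [DecidableEq κ] (A : Matrix ι ι α)
    (v : ι × κ → α) (i : ι) (c : κ) :
    ((A ⊗ₖ (1 : Matrix κ κ α)) *ᵥ v) (i, c) = (A *ᵥ fun j => v (j, c)) i := by
  simp [mulVec, dotProduct, Fintype.sum_prod_type, one_apply]

theorem mul_kronecker_one_apply {m κ : Type*} [Fintype κ] [DecidableEq κ]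
    (A : Matrix m (ι × κ) α) (B : Matrix ι ι α) (q : m) (j : ι) (c : κ) :
    (A * (B ⊗ₖ (1 : Matrix κ κ α))) q (j, c) = ∑ i, A q (i, c) * B i j := by
  simp [mul_apply, Fintype.sum_prod_type, one_apply]

end Cumulative

end Matrix

def Fin.backwardDiff {M : Type*} [Sub M] {b : ℕ} (v : Fin b → M) (i : Fin b) : M :=
  if (i : ℕ) = 0 then v i else v i - v ⟨(i : ℕ) - 1, (Nat.sub_le _ _).trans_lt i.isLt⟩

theorem Fin.backwardDiff_eq_cons {M : Type*} [AddCommGroup M] {b : ℕ} (v : Fin (b + 1) → M)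
    (i : Fin (b + 1)) :
    Fin.backwardDiff v i =
      (Fin.cons 0 v : Fin (b + 2) → M) i.succ - (Fin.cons 0 v : Fin (b + 2) → M) i.castSucc := by
  cases i using Fin.cases with
  | zero => simp [Fin.backwardDiff]
  | succ j =>
    rw [← Fin.succ_castSucc]
    simp only [Fin.backwardDiff, Fin.val_succ, Nat.add_one_ne_zero, if_false, Fin.cons_succ]
    rfl

theorem Fin.sum_Iic_backwardDiff {M : Type*} [AddCommGroup M] {b : ℕ} (v : Fin b → M)
    (k : Fin b) :
    ∑ j ∈ Iic k, Fin.backwardDiff v j = v k := by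
  obtain ⟨b, rfl⟩ := Nat.exists_eq_succ_of_ne_zero k.pos.ne'
  simp_rw [Fin.backwardDiff_eq_cons, Fin.sum_Iic_sub]
  simp

/-- Block structure of the OLS coefficient for the stacked
cumulative design.  With `X₁,…,X_b` (of sizes `n_i × p`) having invertible Gram
matrices and responses `y₁,…,y_b`, let `𝒳` be the stacked design whose `(k,j)`
row-by-column block is `X_k` if `k ≥ j` and `0` otherwise, and let `y` stack the
`y_i`.  Then `𝒳'𝒳` is invertible and `θ̂ = (𝒳'𝒳)⁻¹𝒳'y` has block components
`θ̂₁ = (X₁'X₁)⁻¹X₁'y₁` and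
`θ̂ᵢ = (Xᵢ'Xᵢ)⁻¹Xᵢ'yᵢ − (Xᵢ₋₁'Xᵢ₋₁)⁻¹Xᵢ₋₁'yᵢ₋₁` for `i ≥ 2`. -/
theorem stacked_cumulative_design_ols
    {b p : ℕ} (n : Fin b → ℕ)
    (X : ∀ i : Fin b, Matrix (Fin (n i)) (Fin p) ℝ)
    (hX : ∀ i, IsUnit ((X i)ᵀ * X i).det)
    (y : ∀ i : Fin b, Fin (n i) → ℝ)
    (D : Matrix ((k : Fin b) × Fin (n k)) (Fin b × Fin p) ℝ)
    (hD : ∀ (k : Fin b) (r : Fin (n k)) (j : Fin b) (c : Fin p),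
      D ⟨k, r⟩ (j, c) = if j ≤ k then X k r c else 0)
    (Y : ((k : Fin b) × Fin (n k)) → ℝ)
    (hY : ∀ (k : Fin b) (r : Fin (n k)), Y ⟨k, r⟩ = y k r)
    (θhat : Fin b × Fin p → ℝ)
    (hθ : θhat = ((Dᵀ * D)⁻¹ * Dᵀ).mulVec Y) :
    IsUnit (Dᵀ * D).det ∧
    (∀ (i : Fin b) (c : Fin p),
      θhat (i, c)
        = if h : (i : ℕ) = 0 then
            (((X i)ᵀ * X i)⁻¹ * (X i)ᵀ).mulVec (y i) c
          else
            (((X i)ᵀ * X i)⁻¹ * (X i)ᵀ).mulVec (y i) c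
              - (((X ⟨(i : ℕ) - 1, (Nat.sub_le _ _).trans_lt i.isLt⟩)ᵀ *
                    X ⟨(i : ℕ) - 1, (Nat.sub_le _ _).trans_lt i.isLt⟩)⁻¹ *
                  (X ⟨(i : ℕ) - 1, (Nat.sub_le _ _).trans_lt i.isLt⟩)ᵀ).mulVec
                  (y ⟨(i : ℕ) - 1, (Nat.sub_le _ _).trans_lt i.isLt⟩) c) := by
  set e := (Equiv.sigmaEquivProd (Fin b) (Fin p)).symm
  set A := (blockDiagonal' X).submatrix id e
  set C := cumulativeSum (Fin b) ℝ ⊗ₖ (1 : Matrix (Fin p) (Fin p) ℝ)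
  have hDAC : D = A * C := by
    ext ⟨k, r⟩ ⟨j, c⟩
    rw [hD, mul_kronecker_one_apply,
      Fintype.sum_eq_single k fun i hik => by simp [A, e, blockDiagonal'_apply', Ne.symm hik]]
    simp [A, e, cumulativeSum]
  have hA : IsUnit (Aᵀ * A).det := by
    rw [gram_submatrix_equiv, det_submatrix_equiv_self, gram_blockDiagonal']
    exact isUnit_det_blockDiagonal' hX
  have hC : IsUnit C.det := by
    simp [C, det_kronecker, det_cumulativeSum]
  set β : Fin b × Fin p → ℝ := fun q => (leastSquares (X q.1) *ᵥ y q.1) q.2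
  have hβ : leastSquares A *ᵥ Y = β := by
    ext ⟨i, c⟩
    rw [leastSquares_submatrix_equiv, leastSquares_blockDiagonal' hX]
    exact (blockDiagonal'_mulVec (fun i => leastSquares (X i)) Y i c).trans
      (congrArg (fun v => (leastSquares (X i) *ᵥ v) c) (funext (hY i)))
  have hCθ : C *ᵥ (fun q => Fin.backwardDiff (fun j => β (j, q.2)) q.1) = β := by
    ext ⟨k, c⟩
    rw [kronecker_one_mulVec, cumulativeSum_mulVec]
    exact Fin.sum_Iic_backwardDiff (fun j => β (j, c)) k
  refine ⟨hDAC ▸ isUnit_det_gram_mul hA hC, fun i c => ?_⟩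
  rw [show θhat = leastSquares D *ᵥ Y from hθ, hDAC, leastSquares_mul A hC, ← mulVec_mulVec,
    hβ, ← hCθ, mulVec_mulVec, nonsing_inv_mul _ hC, one_mulVec]
  rfl
end

section
/- Let λ > 0, γ > 2, and let A be a d×d real symmetric matrix whose smallest eigenvalue is strictly greater than 1/γ. Then the function f : ℝ^d → ℝ defined by f(θ) = (1/2)·θ'Aθ + Σ_{i=1}^d p^{MCP}_{λ,γ}(|θ_i|) is strictly convex on ℝ^d. -/
/-!
Writing `p` for the MCP penalty, `p(|u|) = λ|u| + (|u| - γλ)₊² / (2γ) - u² / (2γ)` is a convex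
function of `u` minus `u² / (2γ)`. Summing over coordinates, the objective is
`½ θ'(A - γ⁻¹ I)θ` plus a convex function, and `A - γ⁻¹ I` is positive definite because every
eigenvalue of `A` exceeds `1/γ`.
-/

open Matrix

/-- The minimax concave penalty (MCP): `p(u) = λu − u²/(2γ)` for `0 ≤ u ≤ γλ`
and `p(u) = γλ²/2` for `u > γλ`. -/
noncomputable def mcpPenalty (lam γ : ℝ) (u : ℝ) : ℝ :=
  if u ≤ γ * lam then lam * u - u ^ 2 / (2 * γ) else γ * lam ^ 2 / 2

open Set
open scoped Pointwise

theorem ConvexOn.sum {𝕜 E β ι : Type*} [Semiring 𝕜] [PartialOrder 𝕜] [AddCommMonoid E]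
    [AddCommMonoid β] [PartialOrder β] [IsOrderedAddMonoid β] [SMul 𝕜 E]
    [Module 𝕜 β] {s : Set E} (hs : Convex 𝕜 s) (t : Finset ι) {f : ι → E → β}
    (hf : ∀ i ∈ t, ConvexOn 𝕜 s (f i)) :
    ConvexOn 𝕜 s fun x => ∑ i ∈ t, f i x := by
  rw [← Finset.sum_fn]
  exact Finset.sum_induction f (ConvexOn 𝕜 s) (fun _ _ => ConvexOn.add)
    (convexOn_const (0 : β) hs) hf

theorem Matrix.PosDef.strictConvexOn_dotProduct_mulVec {n : Type*} [Fintype n]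
    {B : Matrix n n ℝ} (hB : B.PosDef) :
    StrictConvexOn ℝ univ fun x : n → ℝ => x ⬝ᵥ B *ᵥ x := by
  have hsymm (x y : n → ℝ) : x ⬝ᵥ B *ᵥ y = y ⬝ᵥ B *ᵥ x := by
    rw [dotProduct_mulVec, ← mulVec_transpose, ← conjTranspose_eq_transpose_of_trivial,
      hB.isHermitian.eq, dotProduct_comm]
  refine ⟨convex_univ, fun x _ y _ hxy a b ha hb hab => ?_⟩
  have hpos : 0 < (x - y) ⬝ᵥ B *ᵥ (x - y) := by
    simpa using hB.dotProduct_mulVec_pos (sub_ne_zero.2 hxy)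
  obtain rfl : b = 1 - a := by linarith
  have gap : a * (x ⬝ᵥ B *ᵥ x) + (1 - a) * (y ⬝ᵥ B *ᵥ y)
      - (a • x + (1 - a) • y) ⬝ᵥ B *ᵥ (a • x + (1 - a) • y)
      = a * (1 - a) * ((x - y) ⬝ᵥ B *ᵥ (x - y)) := by
    simp only [mulVec_add, mulVec_sub, mulVec_smul, dotProduct_add, add_dotProduct,
      dotProduct_sub, sub_dotProduct, smul_dotProduct, dotProduct_smul, smul_eq_mul, hsymm y x]
    ring
  simp only [smul_eq_mul]
  linarith [mul_pos (mul_pos ha hb) hpos]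

theorem Matrix.IsHermitian.posDef_sub_smul_one {n : Type*} [Fintype n] [DecidableEq n]
    {A : Matrix n n ℝ} (hA : A.IsHermitian) {c : ℝ} (hc : ∀ i, c < hA.eigenvalues i) :
    (A - c • (1 : Matrix n n ℝ)).PosDef := by
  have hB : (A - c • (1 : Matrix n n ℝ)).IsHermitian := hA.sub (isHermitian_one.smul (.all c))
  have hspec :
      spectrum ℝ (A - c • (1 : Matrix n n ℝ)) = range hA.eigenvalues - ({c} : Set ℝ) := by
    rw [← Algebra.algebraMap_eq_smul_one, ← spectrum.sub_singleton_eq,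
      hA.spectrum_real_eq_range_eigenvalues]
  rw [hB.posDef_iff_eigenvalues_pos]
  intro i
  obtain ⟨_, ⟨j, rfl⟩, _, rfl, hj⟩ := hspec ▸ hB.eigenvalues_mem_spectrum_real i
  linarith [hc j]

theorem mcpPenalty_abs_add_sq_div (lam γ u : ℝ) (hγ : γ ≠ 0) :
    mcpPenalty lam γ |u| + u ^ 2 / (2 * γ) = lam * |u| + max (|u| - γ * lam) 0 ^ 2 / (2 * γ) := by
  unfold mcpPenalty
  split_ifs with h
  · rw [max_eq_right (by linarith), ← sq_abs u]
    ring
  · rw [max_eq_left (by linarith), ← sq_abs u]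
    field_simp
    ring

theorem convexOn_mcpPenalty_abs_add_sq_div {lam γ : ℝ} (hlam : 0 ≤ lam) (hγ : 0 < γ) :
    ConvexOn ℝ univ fun u : ℝ => mcpPenalty lam γ |u| + u ^ 2 / (2 * γ) := by
  simp_rw [mcpPenalty_abs_add_sq_div lam γ _ hγ.ne']
  have habs : ConvexOn ℝ univ fun u : ℝ => |u| := convexOn_univ_norm
  have hexcess : ConvexOn ℝ univ fun u : ℝ => max (|u| - γ * lam) 0 :=
    (habs.sub (concaveOn_const _ convex_univ)).sup (convexOn_const 0 convex_univ)
  have hexcess_sq : ConvexOn ℝ univ fun u : ℝ => max (|u| - γ * lam) 0 ^ 2 :=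
    hexcess.pow (fun _ _ => le_max_right _ _) 2
  refine ((habs.smul hlam).add (hexcess_sq.smul (inv_nonneg.2 (by positivity : 0 ≤ 2 * γ)))).congr
    fun u _ => ?_
  simp only [Pi.add_apply, smul_eq_mul]
  ring

/-- If `λ > 0`, `γ > 2` and `A` is a `d×d` real symmetric matrix
whose smallest eigenvalue exceeds `1/γ`, then
`θ ↦ (1/2)θ'Aθ + Σᵢ p^{MCP}_{λ,γ}(|θᵢ|)` is strictly convex on `ℝ^d`. -/
theorem mcp_penalized_quadratic_strictly_convex
    (lam γ : ℝ) (hlam : 0 < lam) (hγ : 2 < γ)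
    {d : ℕ} (A : Matrix (Fin d) (Fin d) ℝ)
    (hA : A.IsHermitian)
    (heig : ∀ i, 1 / γ < hA.eigenvalues i) :
    StrictConvexOn ℝ (Set.univ : Set (Fin d → ℝ))
      (fun θ : Fin d → ℝ =>
        (1 / 2) * (θ ⬝ᵥ A.mulVec θ) + ∑ i, mcpPenalty lam γ |θ i|) := by
  have hγ0 : 0 < γ := by linarith
  have hquad := ((hA.posDef_sub_smul_one heig).smul (one_half_pos (α := ℝ)))
    |>.strictConvexOn_dotProduct_mulVec
  have hpen : ConvexOn ℝ univ fun θ : Fin d → ℝ =>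
      ∑ i, (mcpPenalty lam γ |θ i| + θ i ^ 2 / (2 * γ)) :=
    ConvexOn.sum convex_univ _ fun i _ =>
      (convexOn_mcpPenalty_abs_add_sq_div hlam.le hγ0).comp_linearMap
        (LinearMap.proj (R := ℝ) (φ := fun _ : Fin d => ℝ) i)
  refine (hquad.add_convexOn hpen).congr fun θ _ => ?_
  simp only [Pi.add_apply, smul_mulVec, sub_mulVec, one_mulVec, dotProduct_smul, dotProduct_sub,
    smul_eq_mul, Finset.sum_add_distrib]
  rw [← Finset.sum_div, show θ ⬝ᵥ θ = ∑ i, θ i ^ 2 by simp only [dotProduct, sq]]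
  field_simp
  ring
end
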